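/- For partitions μ and ν and any integer k, C_k(μ,ν) = C_{−k}(μ^t, ν^t), i.e. f_{μ^t, ν^t}(q) = f_{μ,ν}(q^{−1}). -/

import Mathlib

/-- A partition: a weakly decreasing sequence of natural numbers with finitely many
nonzero parts.  `parts i` is the `(i+1)`-st part (so indexing in the paper is shifted by one). -/
structure Ptn where
  parts : ℕ → ℕ
  anti : ∀ ⦃i j : ℕ⦄, i ≤ j → parts j ≤ parts i
  bnd : ℕ
  bnd_spec : ∀ i, bnd ≤ i → parts i = 0

/-- The empty partition. -/
def zeroP : Ptn := ⟨fun _ => 0, fun _ _ _ => le_rfl, 0, fun _ _ => rfl⟩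

/-- `|μ| = Σ_j μ_j`. -/
def psize (μ : Ptn) : ℕ := ∑ i ∈ Finset.range μ.bnd, μ.parts i

/-- `κ(μ) = |μ| + Σ_j μ_j (μ_j - 2 j)` (the sum over the nonzero parts, `j` being the
1-based index of the part). -/
def kappa (μ : Ptn) : ℤ :=
  (psize μ : ℤ) + ∑ i ∈ Finset.range μ.bnd, (μ.parts i : ℤ) * ((μ.parts i : ℤ) - 2 * (i + 1))

/-- The conjugate (transposed) partition: `(μ^t)_i = #{ j : μ_j ≥ i }`. -/
def pconj (μ : Ptn) : Ptn where
  parts i := ((Finset.range μ.bnd).filter (fun j => i + 1 ≤ μ.parts j)).card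
  anti := by
    intro i j hij
    apply Finset.card_le_card
    intro a ha
    simp only [Finset.mem_filter] at ha ⊢
    exact ⟨ha.1, by omega⟩
  bnd := μ.parts 0
  bnd_spec := by
    intro i hi
    rw [Finset.card_eq_zero, Finset.filter_eq_empty_iff]
    intro a _
    have := μ.anti (Nat.zero_le a)
    omega

/-- The cells of the skew Young diagram `λ/μ`, with 0-based coordinates:
`(i, j)` is a cell iff `μ_{i+1} ≤ j < λ_{i+1}`. -/
def cellsF (lam mu : Ptn) : Finset (ℕ × ℕ) :=
  (Finset.range lam.bnd ×ˢ Finset.range (lam.parts 0)).filter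
    (fun c => mu.parts c.1 ≤ c.2 ∧ c.2 < lam.parts c.1)

open scoped LaurentSeries
noncomputable section

/-- `f_μ(q) = (q/(q-1)) Σ_{i ≥ 1} (q^{μ_i - i} - q^{-i})`, as a rational function in `q = X`.
(The summands vanish for `i > bnd`, so the sum is finite.) -/
def fOne (μ : Ptn) : RatFunc ℚ :=
  (RatFunc.X / (RatFunc.X - 1)) *
    ∑ i ∈ Finset.range μ.bnd,
      ((RatFunc.X : RatFunc ℚ) ^ ((μ.parts i : ℤ) - (i + 1)) - RatFunc.X ^ (-((i : ℤ) + 1)))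

/-- `f_{μ,ν}(q) = (q - 2 + q^{-1}) f_μ(q) f_ν(q) + f_μ(q) + f_ν(q)`. -/
def fTwo (μ ν : Ptn) : RatFunc ℚ :=
  (RatFunc.X - 2 + RatFunc.X⁻¹) * fOne μ * fOne ν + fOne μ + fOne ν

/-- `C_k(μ,ν)`: the coefficient of `q^k` in the Laurent polynomial `f_{μ,ν}(q)`
(read off from the Laurent-series expansion of the rational function `f_{μ,ν}`). -/
def Ck (μ ν : Ptn) (k : ℤ) : ℚ := ((fTwo μ ν : LaurentSeries ℚ)).coeff k

/-!
Summing the geometric series row by row gives `f_μ(q) = Σ q^(j - i)` over the cells `(i, j)` of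
`μ`, a Laurent polynomial. Transposing `μ` transposes its cells and so negates every content,
whence `f_{μ^t}(q) = f_μ(q⁻¹)`; as `q - 2 + q⁻¹` is invariant under `q ↦ q⁻¹`, the same holds for
`f_{μ,ν}`. The substitution `q ↦ q⁻¹` is `LaurentPolynomial.invert`, so we compute in `ℚ[T;T⁻¹]`
and only at the end pass to `RatFunc ℚ` and its Laurent expansion.
-/

open LaurentPolynomial

lemma div_sub_one_mul_zpow_sub_zpow {K : Type*} [Field K] {x : K} (hx : x ≠ 0) (hx1 : x ≠ 1)
    (m : ℕ) (i : ℤ) :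
    x / (x - 1) * (x ^ ((m : ℤ) - (i + 1)) - x ^ (-(i + 1))) =
      ∑ j ∈ Finset.range m, x ^ ((j : ℤ) - i) := by
  have hfactor : x ^ ((m : ℤ) - (i + 1)) - x ^ (-(i + 1)) = x ^ (-(i + 1)) * (x ^ m - 1) := by
    rw [mul_sub, mul_one, ← zpow_natCast, ← zpow_add₀ hx]
    congr 2
    ring
  have hshift : ∀ j : ℕ, x ^ ((j : ℤ) - i) = x * x ^ (-(i + 1)) * x ^ j := fun j => by
    rw [← zpow_natCast, mul_comm x, ← zpow_add_one₀ hx, ← zpow_add₀ hx]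
    congr 1
    ring
  rw [hfactor, Finset.sum_congr rfl fun j _ => hshift j, ← Finset.mul_sum, eq_comm,
    ← mul_div_cancel_right₀ (∑ j ∈ Finset.range m, x ^ j) (sub_ne_zero.mpr hx1), geom_sum_mul]
  ring

namespace Ptn

lemma lt_bnd_of_pos {μ : Ptn} {i : ℕ} (h : 0 < μ.parts i) : i < μ.bnd := by
  by_contra! hb
  exact h.ne' (μ.bnd_spec i hb)

lemma mem_cellsF_zeroP {μ : Ptn} {c : ℕ × ℕ} : c ∈ cellsF μ zeroP ↔ c.2 < μ.parts c.1 := by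
  rw [cellsF, Finset.mem_filter]
  simp only [zeroP, Finset.mem_product, Finset.mem_range]
  refine ⟨fun h => h.2.2, fun h => ⟨⟨lt_bnd_of_pos (by omega), ?_⟩, Nat.zero_le _, h⟩⟩
  exact h.trans_le (μ.anti (Nat.zero_le _))

lemma sum_cellsF_zeroP {M : Type*} [AddCommMonoid M] (μ : Ptn) (f : ℕ × ℕ → M) :
    ∑ c ∈ cellsF μ zeroP, f c =
      ∑ i ∈ Finset.range μ.bnd, ∑ j ∈ Finset.range (μ.parts i), f (i, j) :=
  Finset.sum_finset_product _ _ _ fun c => by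
    rw [mem_cellsF_zeroP, Finset.mem_range, Finset.mem_range]
    exact ⟨fun h => ⟨lt_bnd_of_pos (by omega), h⟩, And.right⟩

lemma lt_pconj_parts_iff {μ : Ptn} {i j : ℕ} : j < (pconj μ).parts i ↔ i < μ.parts j := by
  change j < ((Finset.range μ.bnd).filter (fun l => i + 1 ≤ μ.parts l)).card ↔ _
  constructor
  · intro h
    by_contra! hj
    have hsub : (Finset.range μ.bnd).filter (fun l => i + 1 ≤ μ.parts l) ⊆ Finset.range j :=
      fun l hl => by
        simp only [Finset.mem_filter, Finset.mem_range] at hl ⊢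
        by_contra! hlj
        have := μ.anti hlj
        omega
    have := Finset.card_le_card hsub
    rw [Finset.card_range] at this
    omega
  · intro h
    have hsub : Finset.range (j + 1) ⊆ (Finset.range μ.bnd).filter (fun l => i + 1 ≤ μ.parts l) :=
      fun l hl => by
        have := μ.anti (Finset.mem_range_succ_iff.mp hl)
        simp only [Finset.mem_filter, Finset.mem_range]
        exact ⟨lt_bnd_of_pos (by omega), by omega⟩
    simpa using Finset.card_le_card hsub

lemma cellsF_pconj_zeroP (μ : Ptn) :
    cellsF (pconj μ) zeroP = (cellsF μ zeroP).map (Equiv.prodComm ℕ ℕ).toEmbedding := by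
  ext ⟨i, j⟩
  simp [mem_cellsF_zeroP, lt_pconj_parts_iff]

end Ptn

def contentPoly (R : Type*) [Semiring R] (μ : Ptn) : R[T;T⁻¹] :=
  ∑ c ∈ cellsF μ zeroP, T ((c.2 : ℤ) - c.1)

lemma contentPoly_pconj {R : Type*} [CommSemiring R] (μ : Ptn) :
    contentPoly R (pconj μ) = invert (contentPoly R μ) := by
  simp [contentPoly, Ptn.cellsF_pconj_zeroP, map_sum]

def pairPoly {R : Type*} [CommRing R] (P Q : R[T;T⁻¹]) : R[T;T⁻¹] :=
  (T 1 - 2 + T (-1)) * P * Q + P + Q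

lemma invert_pairPoly {R : Type*} [CommRing R] (P Q : R[T;T⁻¹]) :
    invert (pairPoly P Q) = pairPoly (invert P) (invert Q) := by
  simp only [pairPoly, map_add, map_mul, map_sub, map_ofNat, invert_T, neg_neg]
  ring

section ToRatFunc

variable {K : Type*} [Field K]

def toRatFunc : K[T;T⁻¹] →+* RatFunc K :=
  LaurentPolynomial.eval₂ (algebraMap K (RatFunc K)) (Units.mk0 RatFunc.X RatFunc.X_ne_zero)

@[simp]
lemma toRatFunc_T (n : ℤ) : toRatFunc (T n : K[T;T⁻¹]) = RatFunc.X ^ n := by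
  simp [toRatFunc]

@[simp]
lemma toRatFunc_C (a : K) : toRatFunc (C a) = RatFunc.C a := by
  simp [toRatFunc]

lemma coeff_toRatFunc (f : K[T;T⁻¹]) (k : ℤ) :
    ((toRatFunc f : RatFunc K) : K⸨X⸩).coeff k = f.coeff k := by
  induction f using LaurentPolynomial.induction_on' with
  | add p q hp hq => simp [hp, hq]
  | C_mul_T n a =>
    rw [map_mul, toRatFunc_C, toRatFunc_T, map_mul, map_zpow₀, RatFunc.coe_X,
      ← RatFunc.single_zpow, ← single_eq_C_mul_T, ← RatFunc.algebraMap_C,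
      ← IsScalarTower.algebraMap_apply]
    simp only [Polynomial.algebraMap_hahnSeries_apply, Polynomial.coe_C, HahnSeries.ofPowerSeries_C,
      HahnSeries.C_apply, HahnSeries.single_mul_single, zero_add, mul_one, HahnSeries.coeff_single,
      AddMonoidAlgebra.coeff_single, Finsupp.single_apply, eq_comm]
    congr

end ToRatFunc

lemma fOne_eq_toRatFunc (μ : Ptn) : fOne μ = toRatFunc (contentPoly ℚ μ) := by
  have hX1 : (RatFunc.X : RatFunc ℚ) ≠ 1 := fun h => by
    simpa using congrArg RatFunc.intDegree h
  rw [fOne, Finset.mul_sum, contentPoly, map_sum, Ptn.sum_cellsF_zeroP]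
  refine Finset.sum_congr rfl fun i _ => ?_
  simp only [toRatFunc_T]
  exact_mod_cast div_sub_one_mul_zpow_sub_zpow RatFunc.X_ne_zero hX1 (μ.parts i) i

lemma fTwo_eq_toRatFunc (μ ν : Ptn) :
    fTwo μ ν = toRatFunc (pairPoly (contentPoly ℚ μ) (contentPoly ℚ ν)) := by
  rw [fTwo, fOne_eq_toRatFunc, fOne_eq_toRatFunc]
  simp only [pairPoly, map_add, map_mul, map_sub, map_ofNat, toRatFunc_T, zpow_one, zpow_neg_one]

lemma Ck_eq_coeff_pairPoly (μ ν : Ptn) (k : ℤ) :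
    Ck μ ν k = (pairPoly (contentPoly ℚ μ) (contentPoly ℚ ν)).coeff k := by
  rw [Ck, ← coeff_toRatFunc, fTwo_eq_toRatFunc]

/-- `C_k(μ,ν) = C_{-k}(μ^t,ν^t)` for every integer `k`
(equivalently, `f_{μ^t,ν^t}(q) = f_{μ,ν}(q^{-1})`). -/
theorem Ck_conj (μ ν : Ptn) (k : ℤ) : Ck μ ν k = Ck (pconj μ) (pconj ν) (-k) := by
  rw [Ck_eq_coeff_pairPoly, Ck_eq_coeff_pairPoly, contentPoly_pconj, contentPoly_pconj,
    ← invert_pairPoly, invert_apply, neg_neg]
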